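/- Reilly inequality for star-shaped graphs: let Γ be an n-star-shaped graph in ℝ^N with center A_0, endpoints A_1, …, A_n, edge lengths ℓ_i = |A_i − A_0| and unit directions τ_i = (A_i − A_0)/ℓ_i. Then λ_1 · ∑_{i=1}^n ℓ_i ≤ n + |∑_{i=1}^n τ_i|². -/

import Mathlib

open MeasureTheory
open scoped RealInnerProductSpace ENNReal

noncomputable section

/-- `A₀` (the center) together with the endpoints `A i` forms an `n`-star-shaped graph:
each endpoint differs from the center, and no edge `[A₀, Aᵢ]` is contained in another
edge `[A₀, Aⱼ]`. -/
def IsStarGraph {N n : ℕ} (A0 : EuclideanSpace ℝ (Fin N))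
    (A : Fin n → EuclideanSpace ℝ (Fin N)) : Prop :=
  (∀ i, A i ≠ A0) ∧
  ∀ i j : Fin n, i ≠ j → ¬ segment ℝ A0 (A i) ⊆ segment ℝ A0 (A j)

/-- The unit direction `τᵢ = (Aᵢ − A₀)/|Aᵢ − A₀|` of the `i`-th edge of a star-shaped
graph. -/
def starTau {N n : ℕ} (A0 : EuclideanSpace ℝ (Fin N))
    (A : Fin n → EuclideanSpace ℝ (Fin N)) (i : Fin n) : EuclideanSpace ℝ (Fin N) :=
  ‖A i - A0‖⁻¹ • (A i - A0)

/-- The first nonzero "eigenvalue" `λ₁` of a star-shaped graph, defined as the infimum of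
the Rayleigh quotients
`(∑ᵢ ∫_{[A₀, Aᵢ]} ⟪∇u(x), τᵢ⟫² dℋ¹(x)) / (∑_{i=0}^n u(Aᵢ)²)`
over smooth `u : ℝᴺ → ℝ` with `∑_{i=0}^n u(Aᵢ) = 0` and `∑_{i=0}^n u(Aᵢ)² ≠ 0`. -/
def starLambda1 {N n : ℕ} (A0 : EuclideanSpace ℝ (Fin N))
    (A : Fin n → EuclideanSpace ℝ (Fin N)) : ℝ :=
  sInf { r : ℝ | ∃ u : EuclideanSpace ℝ (Fin N) → ℝ, ContDiff ℝ (⊤ : ℕ∞) u ∧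
    (u A0 + ∑ i, u (A i)) = 0 ∧ (u A0 ^ 2 + ∑ i, u (A i) ^ 2) ≠ 0 ∧
    r = (∑ i, ∫ x in segment ℝ A0 (A i),
          (fderiv ℝ u x (starTau A0 A i)) ^ 2 ∂(μH[1])) /
        (u A0 ^ 2 + ∑ i, u (A i) ^ 2) }

private lemma pilp_sum_apply {N n : ℕ} (A : Fin n → EuclideanSpace ℝ (Fin N)) (k : Fin N) :
    (∑ i, A i) k = ∑ i, A i k := by
  induction (Finset.univ : Finset (Fin n)) using Finset.induction with
  | empty => rfl
  | insert _ _ h ih => rw [Finset.sum_insert h, Finset.sum_insert h, PiLp.add_apply, ih]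

private lemma euclid_normsq {N : ℕ} (v : EuclideanSpace ℝ (Fin N)) :
    ∑ k, (v k) ^ 2 = ‖v‖ ^ 2 := by
  rw [EuclideanSpace.norm_eq, Real.sq_sqrt (by positivity)]
  simp [sq_abs]

private lemma star_integral_const {N : ℕ} (x y : EuclideanSpace ℝ (Fin N)) (f : ℝ) :
    ∫ _ in segment ℝ x y, f ∂(μH[1]) = ‖y - x‖ * f := by
  rw [setIntegral_const, measureReal_def, hausdorffMeasure_segment, edist_dist, ENNReal.toReal_ofReal dist_nonneg,
    dist_eq_norm', smul_eq_mul]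

private lemma star_bddBelow {N n : ℕ} (A0 : EuclideanSpace ℝ (Fin N))
    (A : Fin n → EuclideanSpace ℝ (Fin N)) :
    ∀ r ∈ { r : ℝ | ∃ u : EuclideanSpace ℝ (Fin N) → ℝ, ContDiff ℝ (⊤ : ℕ∞) u ∧
    (u A0 + ∑ i, u (A i)) = 0 ∧ (u A0 ^ 2 + ∑ i, u (A i) ^ 2) ≠ 0 ∧
    r = (∑ i, ∫ x in segment ℝ A0 (A i),
          (fderiv ℝ u x (starTau A0 A i)) ^ 2 ∂(μH[1])) /
        (u A0 ^ 2 + ∑ i, u (A i) ^ 2) }, 0 ≤ r := by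
  rintro r ⟨u, -, -, hne, rfl⟩
  apply div_nonneg
  · exact Finset.sum_nonneg fun i _ => integral_nonneg fun x => sq_nonneg _
  · positivity

private lemma star_tau_norm {N n : ℕ} (A0 : EuclideanSpace ℝ (Fin N))
    (A : Fin n → EuclideanSpace ℝ (Fin N)) (hA : ∀ i, A i ≠ A0) (i : Fin n) :
    ‖starTau A0 A i‖ = 1 := by
  have h : ‖A i - A0‖ ≠ 0 := by
    simpa [sub_eq_zero] using hA i
  rw [starTau, norm_smul, norm_inv, norm_norm, inv_mul_cancel₀ h]

private lemma star_key {N n : ℕ} (A0 : EuclideanSpace ℝ (Fin N))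
    (A : Fin n → EuclideanSpace ℝ (Fin N)) (hA : ∀ i, A i ≠ A0)
    (c : EuclideanSpace ℝ (Fin N))
    (hc : ∀ k, A0 k + ∑ i, A i k = ((n : ℝ) + 1) * c k) :
    starLambda1 A0 A * (‖A0 - c‖ ^ 2 + ∑ i, ‖A i - c‖ ^ 2) ≤ ∑ i, ‖A i - A0‖ := by
  classical
  set τ := starTau A0 A with hτ
  set D : Fin N → ℝ := fun k => (A0 k - c k) ^ 2 + ∑ i, (A i k - c k) ^ 2 with hD
  set Nm : Fin N → ℝ := fun k => ∑ i, ‖A i - A0‖ * (τ i k) ^ 2 with hNm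
  have hNm_nonneg : ∀ k, 0 ≤ Nm k := fun k =>
    Finset.sum_nonneg fun i _ => mul_nonneg (norm_nonneg _) (sq_nonneg _)
  have hstep : ∀ k, starLambda1 A0 A * D k ≤ Nm k := by
    intro k
    by_cases hDk : D k = 0
    · rw [hDk, mul_zero]; exact hNm_nonneg k
    · have hDk_pos : 0 < D k := by
        rcases lt_or_eq_of_le (show (0:ℝ) ≤ D k by rw [hD]; positivity) with h | h
        · exact h
        · exact absurd h.symm hDk
      have hmem : Nm k / D k ∈ { r : ℝ | ∃ u : EuclideanSpace ℝ (Fin N) → ℝ, ContDiff ℝ (⊤ : ℕ∞) u ∧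
          (u A0 + ∑ i, u (A i)) = 0 ∧ (u A0 ^ 2 + ∑ i, u (A i) ^ 2) ≠ 0 ∧
          r = (∑ i, ∫ x in segment ℝ A0 (A i),
                (fderiv ℝ u x (starTau A0 A i)) ^ 2 ∂(μH[1])) /
              (u A0 ^ 2 + ∑ i, u (A i) ^ 2) } := by
        refine ⟨fun x => x k - c k, ?_, ?_, ?_, ?_⟩
        · exact (EuclideanSpace.proj (𝕜 := ℝ) k).contDiff.sub contDiff_const
        · have := hc k
          rw [Finset.sum_sub_distrib]
          simp only [Finset.sum_const, Finset.card_univ, Fintype.card_fin, nsmul_eq_mul]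
          linarith [hc k]
        · exact hDk
        · have hfd : ∀ x : EuclideanSpace ℝ (Fin N),
              fderiv ℝ (fun x : EuclideanSpace ℝ (Fin N) => x k - c k) x
                = (EuclideanSpace.proj k : EuclideanSpace ℝ (Fin N) →L[ℝ] ℝ) := by
            intro x
            have h2 : (fun x : EuclideanSpace ℝ (Fin N) => x k - c k)
                = fun x => (EuclideanSpace.proj (𝕜 := ℝ) k) x - c k := rfl
            rw [h2, fderiv_sub_const, ContinuousLinearMap.fderiv]
          have hint : ∀ i, (∫ x in segment ℝ A0 (A i),
              (fderiv ℝ (fun x : EuclideanSpace ℝ (Fin N) => x k - c k) x (starTau A0 A i)) ^ 2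
                ∂(μH[1])) = ‖A i - A0‖ * (τ i k) ^ 2 := by
            intro i
            have h3 : (fun x : EuclideanSpace ℝ (Fin N) =>
                (fderiv ℝ (fun x : EuclideanSpace ℝ (Fin N) => x k - c k) x (starTau A0 A i)) ^ 2)
                = fun _ => (τ i k) ^ 2 := by
              funext x; rw [hfd]; rfl
            rw [show (∫ x in segment ℝ A0 (A i),
                (fderiv ℝ (fun x : EuclideanSpace ℝ (Fin N) => x k - c k) x (starTau A0 A i)) ^ 2
                  ∂(μH[1])) = ∫ _ in segment ℝ A0 (A i), (τ i k) ^ 2 ∂(μH[1]) from by rw [h3],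
              star_integral_const]
          simp only [hint]
          rfl
      have h1 : starLambda1 A0 A ≤ Nm k / D k := csInf_le ⟨0, star_bddBelow A0 A⟩ hmem
      calc starLambda1 A0 A * D k ≤ (Nm k / D k) * D k :=
            mul_le_mul_of_nonneg_right h1 hDk_pos.le
        _ = Nm k := div_mul_cancel₀ _ hDk
  have hsumD : ∑ k, D k = ‖A0 - c‖ ^ 2 + ∑ i, ‖A i - c‖ ^ 2 := by
    rw [hD]
    rw [Finset.sum_add_distrib, Finset.sum_comm]
    congr 1
    · have := euclid_normsq (A0 - c); simpa [PiLp.sub_apply] using this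
    · refine Finset.sum_congr rfl fun i _ => ?_
      have := euclid_normsq (A i - c); simpa [PiLp.sub_apply] using this
  have hsumN : ∑ k, Nm k = ∑ i, ‖A i - A0‖ := by
    rw [hNm, Finset.sum_comm]
    refine Finset.sum_congr rfl fun i _ => ?_
    rw [← Finset.mul_sum, euclid_normsq, star_tau_norm A0 A hA i, one_pow, mul_one]
  calc starLambda1 A0 A * (‖A0 - c‖ ^ 2 + ∑ i, ‖A i - c‖ ^ 2)
      = ∑ k, starLambda1 A0 A * D k := by rw [← Finset.mul_sum, hsumD]
    _ ≤ ∑ k, Nm k := Finset.sum_le_sum fun k _ => hstep k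
    _ = ∑ i, ‖A i - A0‖ := hsumN

/-- **Reilly inequality for star-shaped graphs**:
`λ₁ ∑ᵢ ℓᵢ ≤ n + |∑ᵢ τᵢ|²`, with `ℓᵢ = |Aᵢ − A₀|` and `τᵢ = (Aᵢ − A₀)/ℓᵢ`. -/
theorem reilly_star_graph {N n : ℕ} (A0 : EuclideanSpace ℝ (Fin N))
    (A : Fin n → EuclideanSpace ℝ (Fin N)) (hA : IsStarGraph A0 A) :
    starLambda1 A0 A * (∑ i, ‖A i - A0‖) ≤ n + ‖∑ i, starTau A0 A i‖ ^ 2 := by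
  classical
  rcases Nat.eq_zero_or_pos n with hn | hn
  · subst hn; simp
  set c := (((n : ℝ) + 1)⁻¹) • (A0 + ∑ i, A i) with hcdef
  have hne1 : ((n : ℝ) + 1) ≠ 0 := by positivity
  have hc : ∀ k, A0 k + ∑ i, A i k = ((n : ℝ) + 1) * c k := by
    intro k
    rw [hcdef, PiLp.smul_apply, smul_eq_mul, PiLp.add_apply, pilp_sum_apply,
      mul_inv_cancel_left₀ hne1]
  set S := ‖A0 - c‖ ^ 2 + ∑ i, ‖A i - c‖ ^ 2 with hSdef
  set L := ∑ i, ‖A i - A0‖ with hLdef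
  set T := ∑ i, starTau A0 A i with hTdef
  have hL0 : (0 : ℝ) ≤ L := Finset.sum_nonneg fun i _ => norm_nonneg _
  have hkey : starLambda1 A0 A * S ≤ L := star_key A0 A hA.1 c hc
  have hS0 : (0 : ℝ) ≤ S := by rw [hSdef]; positivity
  have hSpos : 0 < S := by
    rcases hS0.lt_or_eq with h | h
    · exact h
    exfalso
    have h' : ‖A0 - c‖ ^ 2 = 0 ∧ ∑ i, ‖A i - c‖ ^ 2 = 0 := by
      constructor <;> nlinarith [sq_nonneg ‖A0 - c‖,
        Finset.sum_nonneg (fun (i : Fin n) (_ : i ∈ Finset.univ) => sq_nonneg ‖A i - c‖)]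
    have hA0c : A0 = c := by
      have := h'.1
      rw [pow_eq_zero_iff (two_ne_zero), norm_eq_zero, sub_eq_zero] at this
      exact this
    obtain ⟨i0⟩ : Nonempty (Fin n) := ⟨⟨0, hn⟩⟩
    have hAi : ‖A i0 - c‖ ^ 2 = 0 :=
      (Finset.sum_eq_zero_iff_of_nonneg fun i _ => sq_nonneg _).mp h'.2 i0 (Finset.mem_univ _)
    rw [pow_eq_zero_iff (two_ne_zero), norm_eq_zero, sub_eq_zero] at hAi
    exact hA.1 i0 (hAi.trans hA0c.symm)
  -- step B
  have hinner : ∀ i, ⟪A i - A0, starTau A0 A i⟫ = ‖A i - A0‖ := by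
    intro i
    have h : ‖A i - A0‖ ≠ 0 := by simpa [sub_eq_zero] using hA.1 i
    rw [starTau, real_inner_smul_right, real_inner_self_eq_norm_sq]
    field_simp
  have hLid : ∑ i, ⟪A i - c, starTau A0 A i⟫ = L + ⟪A0 - c, T⟫ := by
    have h1 : ∀ i : Fin n, ⟪A i - c, starTau A0 A i⟫
        = ⟪A i - A0, starTau A0 A i⟫ + ⟪A0 - c, starTau A0 A i⟫ := by
      intro i
      rw [← inner_add_left]
      congr 1
      abel
    rw [Finset.sum_congr rfl fun i _ => h1 i, Finset.sum_add_distrib, hTdef, inner_sum]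
    congr 1
    exact Finset.sum_congr rfl fun i _ => hinner i
  have hLle : L ≤ ‖A0 - c‖ * ‖T‖ + ∑ i, ‖A i - c‖ := by
    have h2 : ∑ i, ⟪A i - c, starTau A0 A i⟫ ≤ ∑ i, ‖A i - c‖ := by
      refine Finset.sum_le_sum fun i _ => ?_
      calc ⟪A i - c, starTau A0 A i⟫ ≤ ‖A i - c‖ * ‖starTau A0 A i‖ := real_inner_le_norm _ _
        _ = ‖A i - c‖ := by rw [star_tau_norm A0 A hA.1 i, mul_one]
    have h3 : -⟪A0 - c, T⟫ ≤ ‖A0 - c‖ * ‖T‖ := by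
      calc -⟪A0 - c, T⟫ ≤ |⟪A0 - c, T⟫| := neg_le_abs _
        _ ≤ ‖A0 - c‖ * ‖T‖ := abs_real_inner_le_norm _ _
    linarith
  have hCS : (‖A0 - c‖ * ‖T‖ + ∑ i, ‖A i - c‖) ^ 2 ≤ S * (‖T‖ ^ 2 + n) := by
    have hcs := Finset.sum_mul_sq_le_sq_mul_sq Finset.univ
      (Fin.cons ‖A0 - c‖ (fun i => ‖A i - c‖) : Fin (n + 1) → ℝ)
      (Fin.cons ‖T‖ (fun _ => 1))
    simp only [Fin.sum_univ_succ, Fin.cons_zero, Fin.cons_succ, mul_one, one_pow,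
      Finset.sum_const, Finset.card_univ, Fintype.card_fin, nsmul_eq_mul] at hcs
    exact hcs
  have hB : L ^ 2 ≤ S * (‖T‖ ^ 2 + n) := (pow_le_pow_left₀ hL0 hLle 2).trans hCS
  have h1 : starLambda1 A0 A ≤ L / S := (le_div_iff₀ hSpos).mpr hkey
  calc starLambda1 A0 A * L ≤ (L / S) * L := mul_le_mul_of_nonneg_right h1 hL0
    _ = L ^ 2 / S := by ring
    _ ≤ (S * (‖T‖ ^ 2 + n)) / S := div_le_div_of_nonneg_right hB hSpos.le
    _ = n + ‖T‖ ^ 2 := by field_simp; ring
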